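/- Let p > 2, q = p/(p−1) < 2, and let X be uniform on B_p^n, n ≥ 2. Set θ = e_1 and η = (e_1+e_2)/√2. Then |⟨θ,x⟩| ≤ 1 for all x ∈ B_p^n while sup_{x ∈ B_p^n} |⟨η,x⟩| = 2^{1/q − 1/2} > 1; consequently ℙ(⟨η,X⟩² > 1) > 0 and E(⟨η,X⟩² − 1)₊ > 0 = E(⟨θ,X⟩² − 1)₊, so the convex order ⟨η,X⟩² ≼_cx ⟨θ,X⟩² fails even though (θ_1²,...,θ_n²) majorizes (η_1²,...,η_n²). -/

import Mathlib

open MeasureTheory ProbabilityTheory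

/-!
By Hölder's inequality, `|x i + x j| ≤ ‖e_i + e_j‖_q = 2 ^ (1 / q)` on the unit ball of `ℓ_p`,
with equality at `x = 2 ^ (-1 / p) (e_i + e_j)`, while every coordinate satisfies `|x i| ≤ 1`.
Since `q < 2`, the normalized functional `⟨η, x⟩ = (x i + x j) / √2` exceeds `1` on a nonempty
open piece of the ball, which has positive volume; so the convex test function `(z - 1)₊` has
positive mean on `⟨η, X⟩ ^ 2` but vanishes identically on `⟨θ, X⟩ ^ 2 ≤ 1`.
-/

def lpBall (ι : Type*) [Fintype ι] (p : ℝ) : Set (ι → ℝ) := {x | ∑ i, |x i| ^ p ≤ 1}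

section PairPoint

variable {ι : Type*} [DecidableEq ι] {i j : ι}

def pairPoint (i j : ι) (c : ℝ) : ι → ℝ := Pi.single i c + Pi.single j c

lemma pairPoint_apply_left (hij : i ≠ j) (c : ℝ) : pairPoint i j c i = c := by
  simp [pairPoint, Pi.single_eq_of_ne hij]

lemma pairPoint_apply_right (hij : i ≠ j) (c : ℝ) : pairPoint i j c j = c := by
  simp [pairPoint, Pi.single_eq_of_ne hij.symm]

lemma pairPoint_add (hij : i ≠ j) (c : ℝ) : pairPoint i j c i + pairPoint i j c j = 2 * c := by
  rw [pairPoint_apply_left hij, pairPoint_apply_right hij, two_mul]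

lemma sum_abs_rpow_pairPoint [Fintype ι] {p : ℝ} (hp : 0 < p) (hij : i ≠ j) (c : ℝ) :
    ∑ k, |pairPoint i j c k| ^ p = 2 * |c| ^ p := by
  rw [Fintype.sum_eq_add i j hij]
  · rw [pairPoint_apply_left hij, pairPoint_apply_right hij, two_mul]
  · rintro k ⟨hki, hkj⟩
    simp [pairPoint, hki, hkj, Real.zero_rpow hp.ne']

end PairPoint

section lpBall

variable {ι : Type*} [Fintype ι] {p : ℝ}

lemma abs_le_one_of_mem_lpBall (hp : 0 < p) {x : ι → ℝ} (hx : x ∈ lpBall ι p) (i : ι) :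
    |x i| ≤ 1 := by
  have hi : |x i| ^ p ≤ 1 :=
    (Finset.single_le_sum (f := fun j => |x j| ^ p) (fun j _ => by positivity)
      (Finset.mem_univ i)).trans hx
  rwa [← Real.one_rpow p, Real.rpow_le_rpow_iff (abs_nonneg _) zero_le_one hp] at hi

lemma continuous_sum_abs_rpow (hp : 0 < p) : Continuous fun x : ι → ℝ => ∑ i, |x i| ^ p :=
  continuous_finsetSum _ fun i _ => (continuous_apply i).abs.rpow_const fun _ => Or.inr hp.le

lemma isCompact_lpBall (hp : 0 < p) : IsCompact (lpBall ι p) := by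
  refine Metric.isCompact_of_isClosed_isBounded
    (isClosed_le (continuous_sum_abs_rpow hp) continuous_const) ?_
  refine (Metric.isBounded_closedBall (x := 0) (r := 1)).subset fun x hx => ?_
  simpa [pi_norm_le_iff_of_nonneg] using abs_le_one_of_mem_lpBall hp hx

lemma volume_lpBall_pos (hp : 0 < p) : 0 < volume (lpBall ι p) := by
  refine ((isOpen_lt (continuous_sum_abs_rpow hp) continuous_const).measure_pos volume
    ⟨0, ?_⟩).trans_le (measure_mono (Set.ofPred_subset_ofPred.2 fun _ => le_of_lt))
  simp [Real.zero_rpow hp.ne']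

variable [DecidableEq ι] {i j : ι}

lemma abs_add_le_of_mem_lpBall {q : ℝ} (hpq : p.HolderConjugate q) {x : ι → ℝ}
    (hx : x ∈ lpBall ι p) (hij : i ≠ j) : |x i + x j| ≤ 2 ^ q⁻¹ := by
  have hpair : ∑ k ∈ {i, j}, |x k| ^ p ≤ 1 :=
    (Finset.sum_le_univ_sum_of_nonneg fun k => by positivity).trans hx
  calc |x i + x j| ≤ ∑ k ∈ {i, j}, |x k| * 1 := by
        simpa [Finset.sum_pair hij] using abs_add_le (x i) (x j)
    _ ≤ (∑ k ∈ {i, j}, |(|x k|)| ^ p) ^ (1 / p) * (∑ k ∈ {i, j}, |(1 : ℝ)| ^ q) ^ (1 / q) :=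
        Real.inner_le_Lp_mul_Lq _ _ _ hpq
    _ ≤ 1 * 2 ^ q⁻¹ := by
        gcongr
        · simp only [abs_abs]
          exact Real.rpow_le_one (by positivity) hpair (by simp [hpq.nonneg])
        · norm_num [Finset.sum_pair hij]
    _ = 2 ^ q⁻¹ := one_mul _

lemma pairPoint_mem_lpBall (hp : 0 < p) (hij : i ≠ j) :
    pairPoint i j ((1 / 2) ^ p⁻¹) ∈ lpBall ι p := by
  rw [lpBall, Set.mem_ofPred_eq, sum_abs_rpow_pairPoint hp hij, abs_of_pos (by positivity),
    Real.rpow_inv_rpow (by norm_num) hp.ne']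
  norm_num

lemma isGreatest_abs_add_lpBall {q : ℝ} (hpq : p.HolderConjugate q) (hij : i ≠ j) :
    IsGreatest ((fun x => |x i + x j|) '' lpBall ι p) (2 ^ q⁻¹) := by
  refine ⟨⟨_, pairPoint_mem_lpBall hpq.pos hij, ?_⟩, ?_⟩
  · dsimp only
    rw [pairPoint_add hij, abs_of_pos (by positivity), one_div, Real.inv_rpow zero_le_two,
      ← hpq.one_sub_inv, Real.rpow_sub two_pos, Real.rpow_one, div_eq_mul_inv]
  · rintro _ ⟨x, hx, rfl⟩
    exact abs_add_le_of_mem_lpBall hpq hx hij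

lemma isGreatest_abs_add_div_sqrt_two_lpBall {q : ℝ} (hpq : p.HolderConjugate q)
    (hij : i ≠ j) :
    IsGreatest ((fun x => |(x i + x j) / √2|) '' lpBall ι p) (2 ^ (1 / q - 1 / 2)) := by
  have h := ((strictMono_div_right_of_pos (Real.sqrt_pos.2 two_pos)).map_isGreatest).2
    (isGreatest_abs_add_lpBall hpq hij)
  rw [Set.image_image] at h
  have hval : (2 : ℝ) ^ (1 / q - 1 / 2) = 2 ^ q⁻¹ / √2 := by
    rw [Real.rpow_sub two_pos, Real.sqrt_eq_rpow, one_div]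
  simpa only [hval, abs_div, abs_of_pos (Real.sqrt_pos.2 two_pos)] using h

lemma volume_lpBall_inter_pos (hp : 2 < p) (hij : i ≠ j) :
    0 < volume (lpBall ι p ∩ {x | 1 < ((x i + x j) / √2) ^ 2}) := by
  have hp0 : 0 < p := by linarith
  obtain ⟨c, hc₁, hc₂⟩ : ∃ c, √(1 / 2) < c ∧ c < (1 / 2) ^ p⁻¹ := by
    refine exists_between ?_
    rw [Real.sqrt_eq_rpow]
    exact Real.rpow_lt_rpow_of_exponent_gt (by norm_num) (by norm_num)
      (by simpa using (inv_lt_inv₀ hp0 two_pos).2 hp)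
  have hc0 : 0 < c := (Real.sqrt_nonneg _).trans_lt hc₁
  -- `c (e_i + e_j)` lies in the open unit ball and has `((x i + x j) / √2) ^ 2 = 2 c ^ 2 > 1`.
  set U := {x : ι → ℝ | ∑ k, |x k| ^ p < 1} ∩ {x | 1 < ((x i + x j) / √2) ^ 2}
  have hU : IsOpen U := (isOpen_lt (continuous_sum_abs_rpow hp0) continuous_const).inter
    (isOpen_lt continuous_const (by fun_prop))
  have hcU : pairPoint i j c ∈ U := by
    constructor
    · rw [Set.mem_ofPred_eq, sum_abs_rpow_pairPoint hp0 hij, abs_of_pos hc0]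
      have := Real.rpow_lt_rpow hc0.le hc₂ hp0
      rw [Real.rpow_inv_rpow (by norm_num) hp0.ne'] at this
      linarith
    · rw [Set.mem_ofPred_eq, pairPoint_add hij, div_pow, mul_pow, Real.sq_sqrt zero_le_two]
      have := Real.lt_sq_of_sqrt_lt hc₁
      linarith
  exact (hU.measure_pos volume ⟨_, hcU⟩).trans_le (measure_mono
    (Set.inter_subset_inter_left _ (Set.ofPred_subset_ofPred.2 fun _ => le_of_lt)))

lemma cond_lpBall_pos (hp : 2 < p) (hij : i ≠ j) :
    0 < volume[{x | 1 < ((x i + x j) / √2) ^ 2} | lpBall ι p] := by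
  have hp0 : 0 < p := by linarith
  rw [cond_apply (isCompact_lpBall hp0).measurableSet]
  exact ENNReal.mul_pos (ENNReal.inv_ne_zero.2 (isCompact_lpBall hp0).measure_lt_top.ne)
    (volume_lpBall_inter_pos hp hij).ne'

end lpBall

lemma Continuous.integrable_cond {X : Type*} [TopologicalSpace X] [T2Space X]
    [MeasurableSpace X] [OpensMeasurableSpace X] {μ : Measure X} [IsFiniteMeasureOnCompacts μ]
    {K : Set X} (hK : IsCompact K) (hμK : μ K ≠ 0) {f : X → ℝ} (hf : Continuous f) :
    Integrable f μ[|K] :=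
  (hf.continuousOn.integrableOn_compact hK).smul_measure (ENNReal.inv_ne_top.2 hμK)

section PosPart

variable {α : Type*} [MeasurableSpace α] {μ : Measure α} {f : α → ℝ}

lemma integral_max_sub_one_pos (hf : Integrable (fun x => max (f x - 1) 0) μ)
    (h : 0 < μ {x | 1 < f x}) : 0 < ∫ x, max (f x - 1) 0 ∂μ := by
  refine (integral_pos_iff_support_of_nonneg (fun x => le_max_right _ _) hf).2 ?_
  convert h using 2
  ext x
  simp

lemma integral_max_sub_one_eq_zero (h : ∀ᵐ x ∂μ, f x ≤ 1) : ∫ x, max (f x - 1) 0 ∂μ = 0 :=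
  integral_eq_zero_of_ae (h.mono fun x hx => max_eq_right (by linarith))

end PosPart

lemma convexOn_max_sub_one_zero : ConvexOn ℝ Set.univ fun z : ℝ => max (z - 1) 0 :=
  ((convexOn_id convex_univ).sub (concaveOn_const 1 convex_univ)).sup
    (convexOn_const 0 convex_univ)

theorem stmt_19 (n : ℕ) (hn : 2 ≤ n) (p : ℝ) (hp : 2 < p)
    (q : ℝ) (hq : q = p / (p - 1))
    (B : Set (Fin n → ℝ)) (hB : B = {x : Fin n → ℝ | ∑ i, |x i| ^ p ≤ 1})
    (μ : Measure (Fin n → ℝ)) (hμ : μ = (volume B)⁻¹ • volume.restrict B) :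
    (∀ x ∈ B, |x ⟨0, by omega⟩| ≤ 1) ∧
    IsGreatest ((fun x => |(x ⟨0, by omega⟩ + x ⟨1, by omega⟩) / Real.sqrt 2|) '' B)
      ((2 : ℝ) ^ (1 / q - 1 / 2)) ∧
    1 < (2 : ℝ) ^ (1 / q - 1 / 2) ∧
    0 < μ {x : Fin n → ℝ | 1 < ((x ⟨0, by omega⟩ + x ⟨1, by omega⟩) / Real.sqrt 2) ^ 2} ∧
    0 < ∫ x, max (((x ⟨0, by omega⟩ + x ⟨1, by omega⟩) / Real.sqrt 2) ^ 2 - 1) 0 ∂μ ∧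
    (∫ x, max ((x ⟨0, by omega⟩) ^ 2 - 1) 0 ∂μ) = 0 ∧
    ¬ (∀ Φ : ℝ → ℝ, ConvexOn ℝ Set.univ Φ →
        Integrable (fun x => Φ (((x ⟨0, by omega⟩ + x ⟨1, by omega⟩) / Real.sqrt 2) ^ 2)) μ →
        Integrable (fun x => Φ ((x ⟨0, by omega⟩) ^ 2)) μ →
        ∫ x, Φ (((x ⟨0, by omega⟩ + x ⟨1, by omega⟩) / Real.sqrt 2) ^ 2) ∂μ
          ≤ ∫ x, Φ ((x ⟨0, by omega⟩) ^ 2) ∂μ) := by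
  obtain rfl : B = lpBall (Fin n) p := hB
  obtain rfl : μ = volume[|lpBall (Fin n) p] := hμ
  have hp0 : 0 < p := by linarith
  have hpq : p.HolderConjugate q := (Real.holderConjugate_iff_eq_conjExponent (by linarith)).2 hq
  have hij : (⟨0, by omega⟩ : Fin n) ≠ ⟨1, by omega⟩ := by simp
  have hK := isCompact_lpBall (ι := Fin n) hp0
  have hint (f : (Fin n → ℝ) → ℝ) (hf : Continuous f) : Integrable f volume[|lpBall (Fin n) p] :=
    hf.integrable_cond hK (volume_lpBall_pos hp0).ne'
  have hη := integral_max_sub_one_pos (hint _ (by fun_prop)) (cond_lpBall_pos hp hij)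
  have hθ := integral_max_sub_one_eq_zero (μ := volume[|lpBall (Fin n) p]) <|
    (ae_cond_mem hK.measurableSet).mono fun x hx =>
      (sq_le_one_iff_abs_le_one _).2 (abs_le_one_of_mem_lpBall hp0 hx ⟨0, by omega⟩)
  refine ⟨fun x hx => abs_le_one_of_mem_lpBall hp0 hx _,
    isGreatest_abs_add_div_sqrt_two_lpBall hpq hij, ?_, cond_lpBall_pos hp hij, hη, hθ,
    fun h => ?_⟩
  · refine Real.one_lt_rpow one_lt_two ?_
    have := (inv_lt_inv₀ hp0 two_pos).2 hp
    linarith [hpq.inv_add_inv_eq_one, one_div q]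
  · have := h _ convexOn_max_sub_one_zero (hint _ (by fun_prop)) (hint _ (by fun_prop))
    linarith
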